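/- arXiv:1106.5756 — 2 statements merged into one kernel-verified Lean document; each statement's English description precedes it below -/
import Mathlib

section
/- (Theorem 1) Let ρ be a biseparable density matrix on (ℂ^d)^{⊗3}, i.e. a finite convex combination of pure states each of which is a tensor product across one of the three bipartitions 1|23, 2|13, 3|12 of the subsystems. Then its full correlation tensor T_{i₁i₂i₃} = tr(ρ (λ_{i₁} ⊗ λ_{i₂} ⊗ λ_{i₃})), i_j ∈ {1,…,d²−1}, satisfies ‖T‖ := (Σ_{i₁i₂i₃} T_{i₁i₂i₃}²)^{1/2} ≤ √(8(d−1)(d²−1)/d³). Consequently, any tripartite state with ‖T‖ > √(8(d−1)(d²−1)/d³) is genuinely multipartite entangled (not biseparable). -/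
/-!
If a pure state is a product `φ ⊗ χ` across the cut `j | {j+1, j+2}`, its correlation tensor
factorises, up to a permutation of the indices, as `a ⊗ b` with `a_m = ⟨φ|λ_m|φ⟩` and
`b_{kl} = ⟨χ|λ_k ⊗ λ_l|χ⟩`. The identity together with the `λ_m` (resp. the `λ_k ⊗ λ_l`) is an
orthogonal family for the Hilbert–Schmidt inner product, and the projector onto a unit vector
has Hilbert–Schmidt norm `1` and overlap `1` with the identity, so Bessel's inequality gives
`‖a‖² ≤ 2 (1 - 1/d)` and `‖b‖² ≤ 4 (1 - 1/d²)`; the product of the two is the bound.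
A biseparable state is a convex combination of such states, its correlation tensor is the same
convex combination of theirs, and the squared norm is convex.
-/

open Matrix BigOperators

noncomputable section

/-- The tensor (Kronecker) product of `n` local operators, acting on
`(ℂ^d)^{⊗n}` with the Hilbert space indexed by functions `Fin n → Fin d`. -/
def tensorOp {n d : ℕ} (A : Fin n → Matrix (Fin d) (Fin d) ℂ) :
    Matrix (Fin n → Fin d) (Fin n → Fin d) ℂ :=
  fun r c => ∏ j, A j (r j) (c j)

open scoped Kronecker InnerProductSpace

section Frobenius

variable {k : Type*} [Fintype k]

def frobeniusVec (A : Matrix k k ℂ) : EuclideanSpace ℂ (k × k) :=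
  WithLp.toLp 2 fun p => A p.1 p.2

theorem inner_frobeniusVec (A B : Matrix k k ℂ) :
    ⟪frobeniusVec A, frobeniusVec B⟫_ℂ = (Aᴴ * B).trace := by
  simp only [frobeniusVec, PiLp.inner_apply, RCLike.inner_apply, Matrix.trace, Matrix.diag,
    Matrix.mul_apply, Matrix.conjTranspose_apply, Fintype.sum_prod_type, RCLike.star_def]
  rw [Finset.sum_comm]
  simp only [mul_comm]

theorem sum_normSq_trace_div_le_of_orthogonal {ι : Type*} [Fintype ι] [DecidableEq ι]
    (u : ι → Matrix k k ℂ) (w : ι → ℝ) (hw : ∀ i, 0 < w i)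
    (hu : ∀ i j, ((u i)ᴴ * u j).trace = if i = j then (w i : ℂ) else 0) (M : Matrix k k ℂ) :
    ∑ i, Complex.normSq ((u i)ᴴ * M).trace / w i ≤ ((Mᴴ * M).trace).re := by
  set v : ι → EuclideanSpace ℂ (k × k) :=
    fun i => ((Real.sqrt (w i))⁻¹ : ℂ) • frobeniusVec (u i)
  have hv : Orthonormal ℂ v := by
    rw [orthonormal_iff_ite]
    intro i j
    simp only [v, inner_smul_left, inner_smul_right, inner_frobeniusVec, hu]
    split_ifs with h
    · subst h
      rw [Complex.conj_inv, Complex.conj_ofReal]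
      have h : ((Real.sqrt (w i))⁻¹ * ((Real.sqrt (w i))⁻¹ * w i) : ℝ) = 1 := by
        rw [← mul_assoc, ← mul_inv, Real.mul_self_sqrt (hw i).le, inv_mul_cancel₀ (hw i).ne']
      exact_mod_cast h
    · simp
  have hbessel := hv.sum_inner_products_le (frobeniusVec M) (s := Finset.univ)
  rw [@norm_sq_eq_re_inner ℂ, inner_frobeniusVec] at hbessel
  refine (Finset.sum_congr rfl fun i _ => ?_).trans_le hbessel
  rw [inner_smul_left, inner_frobeniusVec, norm_mul, mul_pow, Complex.sq_norm, Complex.sq_norm,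
    Complex.normSq_conj, map_inv₀, Complex.normSq_ofReal, Real.mul_self_sqrt (hw i).le,
    div_eq_inv_mul]

theorem trace_vecMulVec_star_self {v : k → ℂ} (hv : ∑ x, Complex.normSq (v x) = 1) :
    (vecMulVec v (star v)).trace = 1 := by
  simp only [trace_vecMulVec, dotProduct, Pi.star_apply, RCLike.star_def, Complex.mul_conj]
  exact_mod_cast hv

theorem vecMulVec_star_self_mul_self {v : k → ℂ} (hv : ∑ x, Complex.normSq (v x) = 1) :
    vecMulVec v (star v) * vecMulVec v (star v) = vecMulVec v (star v) := by
  rw [vecMulVec_mul_vecMulVec, dotProduct_comm, ← trace_vecMulVec, trace_vecMulVec_star_self hv,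
    one_smul]

omit [Fintype k] in
theorem isHermitian_vecMulVec_star_self (v : k → ℂ) : (vecMulVec v (star v)).IsHermitian := by
  rw [IsHermitian, conjTranspose_vecMulVec, star_star]

theorem sum_normSq_trace_vecMulVec_mul_le {ι : Type*} [Fintype ι] [DecidableEq ι]
    (B : ι → Matrix k k ℂ) {ν : ℝ} (hν : 0 < ν) (hB : ∀ i, (B i).IsHermitian)
    (htr : ∀ i, (B i).trace = 0) (horth : ∀ m n, (B m * B n).trace = if m = n then (ν : ℂ) else 0)
    {v : k → ℂ} (hv : ∑ x, Complex.normSq (v x) = 1) :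
    ∑ i, Complex.normSq (vecMulVec v (star v) * B i).trace ≤ ν * (1 - 1 / Fintype.card k) := by
  classical
  have hk : 0 < (Fintype.card k : ℝ) := by
    obtain ⟨x, -, -⟩ := Finset.exists_ne_zero_of_sum_ne_zero (hv ▸ one_ne_zero)
    exact_mod_cast Fintype.card_pos_iff.mpr ⟨x⟩
  set P := vecMulVec v (star v)
  have hP : Pᴴ = P := isHermitian_vecMulVec_star_self v
  have hPP : P * P = P := vecMulVec_star_self_mul_self hv
  have htrP : P.trace = 1 := trace_vecMulVec_star_self hv
  let u : Option ι → Matrix k k ℂ := fun o => o.elim 1 B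
  let w : Option ι → ℝ := fun o => o.elim (Fintype.card k) fun _ => ν
  have hu : ∀ a b, ((u a)ᴴ * u b).trace = if a = b then (w a : ℂ) else 0 := by
    rintro (_ | m) (_ | n)
    · simp [u, w]
    · simp [u, htr]
    · simp [u, (hB m).eq, htr]
    · simp [u, w, (hB m).eq, horth]
  have hbessel := sum_normSq_trace_div_le_of_orthogonal u w
    (by rintro (_ | _) <;> simp [w, hk, hν]) hu P
  simp only [Fintype.sum_option, u, w, Option.elim, conjTranspose_one, one_mul, hP,
    hPP, htrP, (hB _).eq, trace_mul_comm (B _)] at hbessel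
  rwa [Complex.normSq_one, Complex.one_re, ← Finset.sum_div, ← le_sub_iff_add_le',
    div_le_iff₀' hν] at hbessel

end Frobenius

def piFinThreeEquiv {α : Type*} (j : Fin 3) : (Fin 3 → α) ≃ α × α × α where
  toFun x := (x j, x (j + 1), x (j + 2))
  invFun t i := ![t.1, t.2.1, t.2.2] (i - j)
  left_inv x := by funext i; fin_cases j <;> fin_cases i <;> rfl
  right_inv t := by fin_cases j <;> rfl

theorem piFinThreeEquiv_zero_symm_apply {α : Type*} (a b c : α) :
    (piFinThreeEquiv 0).symm (a, b, c) = ![a, b, c] := by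
  funext i; fin_cases i <;> rfl

theorem sum_pi_fin_three {α M : Type*} [Fintype α] [AddCommMonoid M] (f : (Fin 3 → α) → M) :
    ∑ i, f i = ∑ a, ∑ b, ∑ c, f ![a, b, c] := by
  rw [← (piFinThreeEquiv 0).symm.sum_comp]
  simp only [Fintype.sum_prod_type, piFinThreeEquiv_zero_symm_apply]

theorem trace_submatrix_equiv {κ m R : Type*} [Fintype κ] [Fintype m] [AddCommMonoid R]
    (e : κ ≃ m) (M : Matrix m m R) : (M.submatrix e e).trace = M.trace :=
  Fintype.sum_equiv e _ _ fun _ => rfl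

theorem tensorOp_eq_submatrix_kronecker {d : ℕ} (j : Fin 3)
    (A : Fin 3 → Matrix (Fin d) (Fin d) ℂ) :
    tensorOp A = (A j ⊗ₖ (A (j + 1) ⊗ₖ A (j + 2))).submatrix (piFinThreeEquiv j)
      (piFinThreeEquiv j) := by
  ext x y
  simp only [tensorOp, submatrix_apply, kroneckerMap_apply, piFinThreeEquiv, Equiv.coe_fn_mk,
    Fin.prod_univ_three]
  fin_cases j <;> simp <;> ring

theorem vecMulVec_star_eq_submatrix_kronecker {κ m n : Type*} (e : κ ≃ m × n) {Ψ : κ → ℂ}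
    {φ : m → ℂ} {χ : n → ℂ} (hΨ : ∀ r, Ψ r = φ (e r).1 * χ (e r).2) :
    vecMulVec Ψ (star Ψ) = (vecMulVec φ (star φ) ⊗ₖ vecMulVec χ (star χ)).submatrix e e := by
  ext x y
  simp only [vecMulVec_apply, submatrix_apply, kroneckerMap_apply, Pi.star_apply, hΨ, star_mul']
  ring

theorem trace_submatrix_kronecker_mul {κ m n R : Type*} [Fintype κ] [Fintype m] [Fintype n]
    [CommSemiring R] (e : κ ≃ m × n) (P X : Matrix m m R) (Q Y : Matrix n n R) :
    ((P ⊗ₖ Q).submatrix e e * (X ⊗ₖ Y).submatrix e e).trace = (P * X).trace * (Q * Y).trace := by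
  rw [submatrix_mul_equiv, trace_submatrix_equiv, ← mul_kronecker_mul, trace_kronecker]

theorem trace_vecMulVec_star_mul_tensorOp {d : ℕ} (j : Fin 3) {Ψ : (Fin 3 → Fin d) → ℂ}
    {φ : Fin d → ℂ} {χ : Fin d × Fin d → ℂ} (hΨ : ∀ r, Ψ r = φ (r j) * χ (r (j + 1), r (j + 2)))
    (A : Fin 3 → Matrix (Fin d) (Fin d) ℂ) :
    (vecMulVec Ψ (star Ψ) * tensorOp A).trace =
      (vecMulVec φ (star φ) * A j).trace *
        (vecMulVec χ (star χ) * (A (j + 1) ⊗ₖ A (j + 2))).trace := by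
  rw [vecMulVec_star_eq_submatrix_kronecker (piFinThreeEquiv j) hΨ,
    tensorOp_eq_submatrix_kronecker j, trace_submatrix_kronecker_mul]

def correlationTensor {n d : ℕ} {ι : Type*} (lam : ι → Matrix (Fin d) (Fin d) ℂ)
    (ρ : Matrix (Fin n → Fin d) (Fin n → Fin d) ℂ) (i : Fin n → ι) : ℝ :=
  (ρ * tensorOp (lam ∘ i)).trace.re

theorem correlationTensor_sum_smul {n d : ℕ} {ι α : Type*} [Fintype α]
    (lam : ι → Matrix (Fin d) (Fin d) ℂ) (p : α → ℝ)
    (ρ : α → Matrix (Fin n → Fin d) (Fin n → Fin d) ℂ) (i : Fin n → ι) :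
    correlationTensor lam (∑ a, (p a : ℂ) • ρ a) i = ∑ a, p a * correlationTensor lam (ρ a) i := by
  simp only [correlationTensor, Finset.sum_mul, trace_sum, Complex.re_sum, smul_mul, trace_smul,
    smul_eq_mul, Complex.re_ofReal_mul]

theorem sum_sq_correlationTensor_le_mul_of_product {d : ℕ} {ι : Type*} [Fintype ι]
    (lam : ι → Matrix (Fin d) (Fin d) ℂ) (j : Fin 3) {Ψ : (Fin 3 → Fin d) → ℂ}
    {φ : Fin d → ℂ} {χ : Fin d × Fin d → ℂ} (hΨ : ∀ r, Ψ r = φ (r j) * χ (r (j + 1), r (j + 2))) :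
    ∑ i, correlationTensor lam (vecMulVec Ψ (star Ψ)) i ^ 2 ≤
      (∑ m, Complex.normSq (vecMulVec φ (star φ) * lam m).trace) *
        ∑ q : ι × ι, Complex.normSq (vecMulVec χ (star χ) * (lam q.1 ⊗ₖ lam q.2)).trace := by
  set a := fun m => Complex.normSq (vecMulVec φ (star φ) * lam m).trace
  set b := fun q : ι × ι => Complex.normSq (vecMulVec χ (star χ) * (lam q.1 ⊗ₖ lam q.2)).trace
  calc ∑ i, correlationTensor lam (vecMulVec Ψ (star Ψ)) i ^ 2
      ≤ ∑ i, a (piFinThreeEquiv j i).1 * b (piFinThreeEquiv j i).2 := by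
        refine Finset.sum_le_sum fun i _ => ?_
        rw [correlationTensor, trace_vecMulVec_star_mul_tensorOp j hΨ, sq, ← Complex.normSq_mul]
        exact Complex.re_sq_le_normSq _
    _ = ∑ t : ι × ι × ι, a t.1 * b t.2 := (piFinThreeEquiv j).sum_comp fun t => a t.1 * b t.2
    _ = (∑ m, a m) * ∑ q, b q := by rw [Fintype.sum_prod_type, Finset.sum_mul_sum]

theorem sum_sq_weighted_sum_le {α ι : Type*} [Fintype α] [Fintype ι] {p : α → ℝ}
    (hp : ∀ a, 0 ≤ p a) (hpsum : ∑ a, p a = 1) {T : α → ι → ℝ} {B : ℝ}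
    (hT : ∀ a, ∑ i, T a i ^ 2 ≤ B) : ∑ i, (∑ a, p a * T a i) ^ 2 ≤ B :=
  calc ∑ i, (∑ a, p a * T a i) ^ 2
      ≤ ∑ i, ∑ a, p a * T a i ^ 2 := Finset.sum_le_sum fun i _ =>
        Real.pow_arith_mean_le_arith_mean_pow_of_even Finset.univ _ _ (fun a _ => hp a) hpsum
          even_two
    _ = ∑ a, p a * ∑ i, T a i ^ 2 := by rw [Finset.sum_comm]; simp only [Finset.mul_sum]
    _ ≤ ∑ a, p a * B := Finset.sum_le_sum fun a _ => mul_le_mul_of_nonneg_left (hT a) (hp a)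
    _ = B := by rw [← Finset.sum_mul, hpsum, one_mul]

theorem sum_sq_correlationTensor_le_of_product {d : ℕ} {ι : Type*} [Fintype ι]
    [DecidableEq ι] (lam : ι → Matrix (Fin d) (Fin d) ℂ) (hherm : ∀ i, (lam i).IsHermitian)
    (htraceless : ∀ i, (lam i).trace = 0)
    (horth : ∀ m n, (lam m * lam n).trace = if m = n then 2 else 0) (j : Fin 3)
    {Ψ : (Fin 3 → Fin d) → ℂ} {φ : Fin d → ℂ} {χ : Fin d × Fin d → ℂ}
    (hφ : ∑ x, Complex.normSq (φ x) = 1) (hχ : ∑ x, Complex.normSq (χ x) = 1)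
    (hΨ : ∀ r, Ψ r = φ (r j) * χ (r (j + 1), r (j + 2))) :
    ∑ i, correlationTensor lam (vecMulVec Ψ (star Ψ)) i ^ 2 ≤
      8 * ((d : ℝ) - 1) * ((d : ℝ) ^ 2 - 1) / (d : ℝ) ^ 3 := by
  obtain ⟨x, -, -⟩ := Finset.exists_ne_zero_of_sum_ne_zero (hφ ▸ one_ne_zero)
  have hd : (0 : ℝ) < d := by exact_mod_cast x.pos
  have hherm₂ : ∀ q : ι × ι, (lam q.1 ⊗ₖ lam q.2).IsHermitian := fun q => by
    rw [IsHermitian, conjTranspose_kronecker, (hherm _).eq, (hherm _).eq]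
  have htraceless₂ : ∀ q : ι × ι, (lam q.1 ⊗ₖ lam q.2).trace = 0 := fun q => by
    rw [trace_kronecker, htraceless, zero_mul]
  have horth₂ : ∀ q q' : ι × ι, (lam q.1 ⊗ₖ lam q.2 * (lam q'.1 ⊗ₖ lam q'.2)).trace =
      if q = q' then ((4 : ℝ) : ℂ) else 0 := fun q q' => by
    rw [← mul_kronecker_mul, trace_kronecker, horth, horth]
    obtain ⟨m, n⟩ := q
    obtain ⟨m', n'⟩ := q'
    by_cases hm : m = m' <;> by_cases hn : n = n' <;> simp [hm, hn]
    norm_num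
  have ha := sum_normSq_trace_vecMulVec_mul_le lam two_pos hherm htraceless
    (by simpa using horth) hφ
  have hb := sum_normSq_trace_vecMulVec_mul_le _ four_pos hherm₂ htraceless₂ horth₂ hχ
  simp only [Fintype.card_prod, Fintype.card_fin, Nat.cast_mul] at ha hb
  calc _ ≤ _ := sum_sq_correlationTensor_le_mul_of_product lam j hΨ
    _ ≤ (2 * (1 - 1 / d)) * (4 * (1 - 1 / (d * d))) :=
        mul_le_mul ha hb (Finset.sum_nonneg fun _ _ => Complex.normSq_nonneg _) (by
          have : 1 / (d : ℝ) ≤ 1 := (div_le_one hd).mpr (by exact_mod_cast x.pos)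
          linarith)
    _ = 8 * ((d : ℝ) - 1) * ((d : ℝ) ^ 2 - 1) / (d : ℝ) ^ 3 := by
        field_simp
        ring

theorem biseparable_full_correlation_norm_bound_general
    (d : ℕ)
    (lam : Fin (d ^ 2 - 1) → Matrix (Fin d) (Fin d) ℂ)
    (hherm : ∀ i, (lam i).IsHermitian)
    (htraceless : ∀ i, (lam i).trace = 0)
    (horth : ∀ m n, (lam m * lam n).trace = if m = n then 2 else 0)
    (N : ℕ) (p : Fin N → ℝ) (hp : ∀ a, 0 ≤ p a) (hpsum : ∑ a, p a = 1)
    (Ψ : Fin N → (Fin 3 → Fin d) → ℂ)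
    (hbisep : ∀ a, ∃ (j : Fin 3) (φ : Fin d → ℂ) (χ : Fin d × Fin d → ℂ),
        (∑ x, Complex.normSq (φ x) = 1) ∧ (∑ x, Complex.normSq (χ x) = 1) ∧
        ∀ r, Ψ a r = φ (r j) * χ (r (j + 1), r (j + 2)))
    (ρ : Matrix (Fin 3 → Fin d) (Fin 3 → Fin d) ℂ)
    (hρ : ρ = ∑ a, (p a : ℂ) • Matrix.vecMulVec (Ψ a) (star (Ψ a))) :
    Real.sqrt (∑ i₁, ∑ i₂, ∑ i₃,
        ((ρ * tensorOp ![lam i₁, lam i₂, lam i₃]).trace.re) ^ 2) ≤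
      Real.sqrt (8 * ((d : ℝ) - 1) * ((d : ℝ) ^ 2 - 1) / (d : ℝ) ^ 3) := by
  have hpure : ∀ a, ∑ i, correlationTensor lam (vecMulVec (Ψ a) (star (Ψ a))) i ^ 2 ≤
      8 * ((d : ℝ) - 1) * ((d : ℝ) ^ 2 - 1) / (d : ℝ) ^ 3 := fun a => by
    obtain ⟨j, φ, χ, hφ, hχ, hΨ⟩ := hbisep a
    exact sum_sq_correlationTensor_le_of_product lam hherm htraceless horth j hφ hχ hΨ
  have hmixed := sum_sq_weighted_sum_le hp hpsum hpure
  simp only [← correlationTensor_sum_smul, ← hρ, sum_pi_fin_three] at hmixed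
  exact Real.sqrt_le_sqrt hmixed

/-- Theorem 1: If `ρ` is a biseparable density matrix on
`(ℂ^d)^{⊗3}`, i.e. a finite convex combination of pure states each of which is
a product across one of the bipartitions `j | {j+1, j+2}` of the three
subsystems, then the standard norm of its full correlation tensor satisfies
`‖T‖ ≤ √(8(d-1)(d²-1)/d³)`.  Consequently, any tripartite state violating this
bound is genuinely multipartite entangled (not biseparable). -/
theorem biseparable_full_correlation_norm_bound
    (d : ℕ) (hd : 2 ≤ d)
    (lam : Fin (d ^ 2 - 1) → Matrix (Fin d) (Fin d) ℂ)
    (hherm : ∀ i, (lam i).IsHermitian)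
    (htraceless : ∀ i, (lam i).trace = 0)
    (horth : ∀ m n, (lam m * lam n).trace = if m = n then 2 else 0)
    (N : ℕ) (p : Fin N → ℝ) (hp : ∀ a, 0 ≤ p a) (hpsum : ∑ a, p a = 1)
    (Ψ : Fin N → (Fin 3 → Fin d) → ℂ)
    (hΨunit : ∀ a, ∑ x, Complex.normSq (Ψ a x) = 1)
    (hbisep : ∀ a, ∃ (j : Fin 3) (φ : Fin d → ℂ) (χ : Fin d × Fin d → ℂ),
        (∑ x, Complex.normSq (φ x) = 1) ∧ (∑ x, Complex.normSq (χ x) = 1) ∧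
        ∀ r, Ψ a r = φ (r j) * χ (r (j + 1), r (j + 2)))
    (ρ : Matrix (Fin 3 → Fin d) (Fin 3 → Fin d) ℂ)
    (hρ : ρ = ∑ a, (p a : ℂ) • Matrix.vecMulVec (Ψ a) (star (Ψ a))) :
    Real.sqrt (∑ i₁, ∑ i₂, ∑ i₃,
        ((ρ * tensorOp ![lam i₁, lam i₂, lam i₃]).trace.re) ^ 2) ≤
      Real.sqrt (8 * ((d : ℝ) - 1) * ((d : ℝ) ^ 2 - 1) / (d : ℝ) ^ 3) :=
  biseparable_full_correlation_norm_bound_general d lam hherm htraceless horth N p hp hpsum Ψ hbisep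
    ρ hρ
end
end

section
/- (Lemma 1) Let ρ be a two-qubit density matrix and let T be the 3×3 real matrix with entries T_{ij} = tr(ρ (σ_i ⊗ σ_j)), i, j ∈ {1,2,3}. Then every singular value of T is at most 1; equivalently, for every k ∈ {1,2,3} the Ky Fan k norm satisfies ‖T‖_k ≤ k. Moreover, ‖T‖_tr = 3 if and only if ρ is a maximally entangled pure state, i.e. ρ is pure and both of its one-qubit reduced density matrices equal 𝕀₂/2. -/
open Matrix BigOperators ComplexOrder Kronecker

noncomputable section

/-- The three standard Pauli matrices. -/
def pauli : Fin 3 → Matrix (Fin 2) (Fin 2) ℂ :=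
  ![!![0, 1; 1, 0], !![0, -Complex.I; Complex.I, 0], !![1, 0; 0, -1]]

/-- The singular values of a real matrix `M`: the square roots of the
eigenvalues of `MᵀM = MᴴM`. -/
def singVals {I J : Type*} [Fintype I] [Fintype J] [DecidableEq J]
    (M : Matrix I J ℝ) : J → ℝ :=
  fun j => Real.sqrt ((Matrix.posSemidef_conjTranspose_mul_self M).1.eigenvalues j)

/-- The Ky Fan `k` norm: the maximum, over sets of `k` of the singular values,
of their sum — equivalently, the sum of the `k` largest singular values. -/
def kyFanNorm {I J : Type*} [Fintype I] [Fintype J] [DecidableEq J]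
    (k : ℕ) (M : Matrix I J ℝ) : ℝ :=
  (Finset.univ : Finset (Finset J)).sup' ⟨∅, Finset.mem_univ ∅⟩
    fun s => if s.card = k then ∑ j ∈ s, singVals M j else 0

/-- The trace norm: the sum of all singular values. -/
def traceNorm {I J : Type*} [Fintype I] [Fintype J] [DecidableEq J]
    (M : Matrix I J ℝ) : ℝ :=
  ∑ j, singVals M j


/-!
For unit vectors `x, y ∈ ℝ³` the operator `(x·σ) ⊗ (y·σ)` is a Hermitian involution, so its
expectation `xᵀ T y` in any state lies in `[-1, 1]`; hence `‖T‖_op ≤ 1`, i.e. all singular values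
are at most `1`, which gives every Ky Fan bound. Expanding `ρ` in the Pauli product basis gives
`4 tr ρ² = 1 + |a|² + |b|² + ‖T‖_F²`, where `a, b` are the Bloch vectors of the two marginals.
Since the singular values are at most `1`, `‖T‖_tr = 3` iff they all equal `1` iff `‖T‖_F² = 3`,
and since `tr ρ² ≤ 1` this happens iff `tr ρ² = 1` and `a = b = 0`.
-/

lemma Fintype.sum_eq_card_iff_of_le_one {ι : Type*} [Fintype ι] {f : ι → ℝ} (hf : ∀ i, f i ≤ 1) :
    ∑ i, f i = Fintype.card ι ↔ ∀ i, f i = 1 := by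
  rw [Fintype.card_eq_sum_ones, Nat.cast_sum, Nat.cast_one]
  simpa using Finset.sum_eq_sum_iff_of_le (s := Finset.univ) fun i _ => hf i

namespace Matrix

section RCLike

variable {n 𝕜 : Type*} [Fintype n] [RCLike 𝕜] {ρ M : Matrix n n 𝕜}

lemma IsHermitian.im_trace_mul_eq_zero (hρ : ρ.IsHermitian) (hM : M.IsHermitian) :
    RCLike.im (ρ * M).trace = 0 := by
  have h := trace_conjTranspose (ρ * M)
  rw [conjTranspose_mul, hρ.eq, hM.eq, trace_mul_comm] at h
  exact RCLike.conj_eq_iff_im.mp h.symm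

variable [DecidableEq n]

lemma IsHermitian.trace_mul_self_eq_sum_sq_eigenvalues (hρ : ρ.IsHermitian) :
    (ρ * ρ).trace = ∑ i, (hρ.eigenvalues i : 𝕜) ^ 2 := by
  conv_lhs => rw [hρ.spectral_theorem, ← map_mul, Unitary.conjStarAlgAut_apply, trace_mul_cycle,
    Unitary.coe_star_mul_self, one_mul, diagonal_mul_diagonal, trace_diagonal]
  simp [sq]

lemma PosSemidef.re_trace_mul_self_le_one (hρ : ρ.PosSemidef) (hρtr : ρ.trace = 1) :
    RCLike.re (ρ * ρ).trace ≤ 1 := by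
  have hsum : ∑ i, hρ.1.eigenvalues i = 1 := by
    simpa [hρ.1.trace_eq_sum_eigenvalues] using congrArg RCLike.re hρtr
  have hle : ∀ i, hρ.1.eigenvalues i ≤ 1 := fun i =>
    hsum ▸ Finset.single_le_sum (fun j _ => hρ.eigenvalues_nonneg j) (Finset.mem_univ i)
  rw [hρ.1.trace_mul_self_eq_sum_sq_eigenvalues, ← hsum]
  simp only [map_sum, ← RCLike.ofReal_pow, RCLike.ofReal_re]
  exact Finset.sum_le_sum fun i _ => by nlinarith [hρ.eigenvalues_nonneg i, hle i]

-- `(1 - M)² = 2 (1 - M)`, so `2 (1 - tr(ρ M)) = tr((1 - M) ρ (1 - M)ᴴ) ≥ 0`.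
lemma PosSemidef.re_trace_mul_le_one (hρ : ρ.PosSemidef) (hρtr : ρ.trace = 1)
    (hM : M.IsHermitian) (hM2 : M * M = 1) : RCLike.re (ρ * M).trace ≤ 1 := by
  have hsq : (1 - M) * (1 - M) = 2 • (1 - M) := by
    rw [sub_mul, mul_sub, mul_sub, hM2]
    simp only [one_mul, mul_one]
    abel
  have hnonneg := (hρ.mul_mul_conjTranspose_same (1 - M)).trace_nonneg
  rw [conjTranspose_sub, conjTranspose_one, hM.eq, trace_mul_cycle, hsq, smul_mul_assoc,
    trace_smul, sub_mul, one_mul, trace_sub, hρtr, trace_mul_comm M] at hnonneg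
  have := (RCLike.nonneg_iff.mp hnonneg).1
  rw [map_nsmul, map_sub, RCLike.one_re, nsmul_eq_mul, Nat.cast_ofNat] at this
  linarith

end RCLike

section SingularValues

variable {m n : Type*} [Fintype m] [Fintype n]

lemma trace_conjTranspose_mul_self_eq_sum_sq (M : Matrix m n ℝ) :
    (Mᴴ * M).trace = ∑ i, ∑ j, M i j ^ 2 := by
  simp only [trace, diag, mul_apply, conjTranspose_apply, star_trivial]
  rw [Finset.sum_comm]
  simp [sq]

variable [DecidableEq n] {M : Matrix m n ℝ}

lemma eigenvalues_conjTranspose_mul_self_le_one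
    (hM : ∀ x y, x ⬝ᵥ x = 1 → y ⬝ᵥ y = 1 → x ⬝ᵥ M *ᵥ y ≤ 1) (j : n) :
    (posSemidef_conjTranspose_mul_self M).1.eigenvalues j ≤ 1 := by
  set hA := (posSemidef_conjTranspose_mul_self M).1
  set v : n → ℝ := ⇑(hA.eigenvectorBasis j)
  have hv : v ⬝ᵥ v = 1 := by
    have := real_inner_self_eq_norm_sq (hA.eigenvectorBasis j)
    rwa [hA.eigenvectorBasis.orthonormal.1 j, EuclideanSpace.inner_eq_star_dotProduct,
      one_pow] at this
  set w := M *ᵥ v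
  have he : hA.eigenvalues j = w ⬝ᵥ w := by
    rw [hA.eigenvalues_eq]
    change v ⬝ᵥ (Mᵀ * M) *ᵥ v = w ⬝ᵥ w
    rw [← mulVec_mulVec, dotProduct_mulVec, vecMul_transpose, dotProduct_comm]
  rcases (dotProduct_self_star_nonneg w).eq_or_lt with hw | hw
  · rw [he]
    exact hw.symm.trans_le zero_le_one
  set s := √(w ⬝ᵥ w)
  have hs : 0 < s := Real.sqrt_pos.2 hw
  have hss : s * s = w ⬝ᵥ w := Real.mul_self_sqrt hw.le
  have hunit : (s⁻¹ • w) ⬝ᵥ (s⁻¹ • w) = 1 := by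
    rw [smul_dotProduct, dotProduct_smul, ← hss, smul_eq_mul, smul_eq_mul]
    field_simp
  have key := hM (s⁻¹ • w) v hunit hv
  rw [smul_dotProduct, ← hss, smul_eq_mul, inv_mul_cancel_left₀ hs.ne'] at key
  rw [he, ← hss]
  nlinarith

lemma kyFanNorm_le_of_singVals_le_one (hM : ∀ j, singVals M j ≤ 1) (k : ℕ) :
    kyFanNorm k M ≤ k := by
  refine Finset.sup'_le _ _ fun s _ => ?_
  split_ifs with hs
  · simpa [hs] using Finset.sum_le_sum fun j (_ : j ∈ s) => hM j
  · positivity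

lemma traceNorm_eq_card_iff
    (hM : ∀ j, (posSemidef_conjTranspose_mul_self M).1.eigenvalues j ≤ 1) :
    traceNorm M = Fintype.card n ↔ ∑ i, ∑ j, M i j ^ 2 = Fintype.card n := by
  have hsum : ∑ j, (posSemidef_conjTranspose_mul_self M).1.eigenvalues j
      = ∑ i, ∑ j, M i j ^ 2 := by
    rw [← trace_conjTranspose_mul_self_eq_sum_sq,
      (posSemidef_conjTranspose_mul_self M).1.trace_eq_sum_eigenvalues]
    simp
  rw [traceNorm, ← hsum,
    Fintype.sum_eq_card_iff_of_le_one (f := singVals M) fun j => Real.sqrt_le_one.2 (hM j),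
    Fintype.sum_eq_card_iff_of_le_one hM]
  simp only [singVals, Real.sqrt_eq_one]

end SingularValues

section PartialTrace

variable {m n R : Type*} [CommSemiring R]

def partialTraceRight [Fintype n] (ρ : Matrix (m × n) (m × n) R) : Matrix m m R :=
  of fun a b => ∑ c, ρ (a, c) (b, c)

def partialTraceLeft [Fintype m] (ρ : Matrix (m × n) (m × n) R) : Matrix n n R :=
  of fun a b => ∑ c, ρ (c, a) (c, b)

lemma IsHermitian.partialTraceRight [StarRing R] [Fintype n] {ρ : Matrix (m × n) (m × n) R}
    (hρ : ρ.IsHermitian) : (partialTraceRight ρ).IsHermitian := by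
  ext a b
  simp only [conjTranspose_apply, Matrix.partialTraceRight, of_apply, star_sum]
  exact Finset.sum_congr rfl fun c _ => hρ.apply (a, c) (b, c)

lemma IsHermitian.partialTraceLeft [StarRing R] [Fintype m] {ρ : Matrix (m × n) (m × n) R}
    (hρ : ρ.IsHermitian) : (partialTraceLeft ρ).IsHermitian := by
  ext a b
  simp only [conjTranspose_apply, Matrix.partialTraceLeft, of_apply, star_sum]
  exact Finset.sum_congr rfl fun c _ => hρ.apply (c, a) (c, b)

variable [Fintype m] [Fintype n]

lemma trace_partialTraceRight (ρ : Matrix (m × n) (m × n) R) :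
    (partialTraceRight ρ).trace = ρ.trace := by
  simp [trace, partialTraceRight, Fintype.sum_prod_type]

lemma trace_partialTraceLeft (ρ : Matrix (m × n) (m × n) R) :
    (partialTraceLeft ρ).trace = ρ.trace := by
  simp only [trace, partialTraceLeft, diag_apply, of_apply, Fintype.sum_prod_type]
  exact Finset.sum_comm

lemma trace_mul_kronecker_one [DecidableEq n] (ρ : Matrix (m × n) (m × n) R) (A : Matrix m m R) :
    (ρ * (A ⊗ₖ (1 : Matrix n n R))).trace = (partialTraceRight ρ * A).trace := by
  simp only [trace, diag_apply, mul_apply, kroneckerMap_apply, one_apply, mul_ite, mul_one,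
    mul_zero, Fintype.sum_prod_type, Finset.sum_ite_eq', Finset.mem_univ, if_true,
    partialTraceRight, of_apply, Finset.sum_mul]
  exact Finset.sum_congr rfl fun _ _ => Finset.sum_comm

lemma trace_mul_one_kronecker [DecidableEq m] (ρ : Matrix (m × n) (m × n) R) (B : Matrix n n R) :
    (ρ * ((1 : Matrix m m R) ⊗ₖ B)).trace = (partialTraceLeft ρ * B).trace := by
  simp only [trace, diag_apply, mul_apply, kroneckerMap_apply, one_apply, ite_mul, one_mul,
    zero_mul, mul_ite, mul_zero, Fintype.sum_prod_type, Finset.sum_ite_irrel,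
    Finset.sum_const_zero, Finset.sum_ite_eq', Finset.mem_univ, if_true, partialTraceLeft, of_apply,
    Finset.sum_mul]
  simp_rw [Finset.sum_comm (s := (Finset.univ : Finset n)) (t := (Finset.univ : Finset m))]

end PartialTrace

lemma IsHermitian.kronecker {m n R : Type*} [CommSemiring R] [StarRing R] {A : Matrix m m R}
    {B : Matrix n n R} (hA : A.IsHermitian) (hB : B.IsHermitian) : (A ⊗ₖ B).IsHermitian := by
  rw [IsHermitian, conjTranspose_kronecker, hA.eq, hB.eq]

end Matrix

def pauliVec (x : Fin 3 → ℝ) : Matrix (Fin 2) (Fin 2) ℂ := ∑ i, (x i : ℂ) • pauli i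

def correlationMatrix (ρ : Matrix (Fin 2 × Fin 2) (Fin 2 × Fin 2) ℂ) :
    Matrix (Fin 3) (Fin 3) ℝ :=
  of fun i j => (ρ * (pauli i ⊗ₖ pauli j)).trace.re

lemma pauli_isHermitian (i : Fin 3) : (pauli i).IsHermitian := by
  fin_cases i <;> ext a b <;> fin_cases a <;> fin_cases b <;> simp [pauli]

lemma trace_pauli (i : Fin 3) : (pauli i).trace = 0 := by
  fin_cases i <;> simp [pauli, trace_fin_two]

lemma pauliVec_isHermitian (x : Fin 3 → ℝ) : (pauliVec x).IsHermitian := by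
  ext a b
  fin_cases a <;> fin_cases b <;> simp [pauliVec, pauli, Fin.sum_univ_three]

lemma pauliVec_mul_self (x : Fin 3 → ℝ) :
    pauliVec x * pauliVec x = ((x ⬝ᵥ x : ℝ) : ℂ) • 1 := by
  ext a b
  fin_cases a <;> fin_cases b <;>
    simp [pauliVec, pauli, Fin.sum_univ_three, mul_apply, dotProduct] <;> ring_nf <;>
    simp [Complex.I_sq]

lemma pauliVec_kronecker_pauliVec (x y : Fin 3 → ℝ) :
    pauliVec x ⊗ₖ pauliVec y = ∑ i, ∑ j, ((x i * y j : ℝ) : ℂ) • (pauli i ⊗ₖ pauli j) := by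
  ext a b
  simp only [pauliVec, kroneckerMap_apply, Matrix.sum_apply, Matrix.smul_apply, smul_eq_mul,
    Finset.mul_sum, Finset.sum_mul, Complex.ofReal_mul]
  rw [Finset.sum_comm]
  exact Finset.sum_congr rfl fun i _ => Finset.sum_congr rfl fun j _ => by ring

lemma pauli_expansion (M : Matrix (Fin 2) (Fin 2) ℂ) :
    M = (2 : ℂ)⁻¹ • (M.trace • 1 + ∑ i, (M * pauli i).trace • pauli i) := by
  ext a b
  fin_cases a <;> fin_cases b <;>
    simp [pauli, Fin.sum_univ_three, trace_fin_two, mul_apply] <;> ring_nf <;>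
    simp [Complex.I_sq] <;> ring

lemma eq_half_smul_one_iff_re_trace_mul_pauli_eq_zero {M : Matrix (Fin 2) (Fin 2) ℂ}
    (hM : M.IsHermitian) (htr : M.trace = 1) :
    M = (2 : ℂ)⁻¹ • 1 ↔ ∀ i, (M * pauli i).trace.re = 0 := by
  constructor
  · rintro rfl i
    simp [trace_pauli]
  · intro h
    have h' : ∀ i, (M * pauli i).trace = 0 := fun i =>
      Complex.ext (h i) (hM.im_trace_mul_eq_zero (pauli_isHermitian i))
    rw [pauli_expansion M]
    simp [h', htr]

lemma pauli_parseval (ρ : Matrix (Fin 2 × Fin 2) (Fin 2 × Fin 2) ℂ) :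
    ρ.trace ^ 2 + ∑ i, (ρ * (pauli i ⊗ₖ 1)).trace ^ 2 + ∑ j, (ρ * (1 ⊗ₖ pauli j)).trace ^ 2
      + ∑ i, ∑ j, (ρ * (pauli i ⊗ₖ pauli j)).trace ^ 2 = 4 * (ρ * ρ).trace := by
  simp [trace, mul_apply, Fintype.sum_prod_type, Fin.sum_univ_succ, pauli, kroneckerMap_apply,
    one_apply]
  ring_nf
  simp only [Complex.I_sq]
  ring

lemma dotProduct_correlationMatrix_mulVec (ρ : Matrix (Fin 2 × Fin 2) (Fin 2 × Fin 2) ℂ)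
    (x y : Fin 3 → ℝ) :
    x ⬝ᵥ correlationMatrix ρ *ᵥ y = (ρ * (pauliVec x ⊗ₖ pauliVec y)).trace.re := by
  simp only [dotProduct, mulVec, correlationMatrix, of_apply, Finset.mul_sum,
    pauliVec_kronecker_pauliVec, Matrix.mul_smul, trace_sum, trace_smul, smul_eq_mul,
    Complex.re_sum, Complex.re_ofReal_mul]
  exact Finset.sum_congr rfl fun i _ => Finset.sum_congr rfl fun j _ => by ring

section State

variable {ρ : Matrix (Fin 2 × Fin 2) (Fin 2 × Fin 2) ℂ}

lemma dotProduct_correlationMatrix_mulVec_le_one (hρ : ρ.PosSemidef) (hρtr : ρ.trace = 1)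
    {x y : Fin 3 → ℝ} (hx : x ⬝ᵥ x = 1) (hy : y ⬝ᵥ y = 1) :
    x ⬝ᵥ correlationMatrix ρ *ᵥ y ≤ 1 := by
  rw [dotProduct_correlationMatrix_mulVec]
  refine hρ.re_trace_mul_le_one hρtr
    ((pauliVec_isHermitian x).kronecker (pauliVec_isHermitian y)) ?_
  rw [← mul_kronecker_mul, pauliVec_mul_self, pauliVec_mul_self, hx, hy]
  simp

lemma correlationMatrix_parseval (hρ : ρ.IsHermitian) (hρtr : ρ.trace = 1) :
    1 + ∑ i, (partialTraceRight ρ * pauli i).trace.re ^ 2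
      + ∑ j, (partialTraceLeft ρ * pauli j).trace.re ^ 2
      + ∑ i, ∑ j, correlationMatrix ρ i j ^ 2 = 4 * (ρ * ρ).trace.re := by
  have hre : ∀ {z : ℂ}, z.im = 0 → (z ^ 2).re = z.re ^ 2 := fun hz => by
    rw [sq, Complex.mul_re, hz]
    ring
  have hA (i : Fin 3) := hre (hρ.partialTraceRight.im_trace_mul_eq_zero (pauli_isHermitian i))
  have hB (j : Fin 3) := hre (hρ.partialTraceLeft.im_trace_mul_eq_zero (pauli_isHermitian j))
  have hT (i j : Fin 3) := hre (hρ.im_trace_mul_eq_zero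
    ((pauli_isHermitian i).kronecker (pauli_isHermitian j)))
  have h := congrArg Complex.re (pauli_parseval ρ)
  simp only [Complex.add_re, Complex.re_sum, hρtr, trace_mul_kronecker_one,
    trace_mul_one_kronecker, hA, hB, hT] at h
  simpa [correlationMatrix] using h

lemma sum_sq_correlationMatrix_eq_three_iff (hρ : ρ.PosSemidef) (hρtr : ρ.trace = 1) :
    ∑ i, ∑ j, correlationMatrix ρ i j ^ 2 = 3 ↔
      (ρ * ρ).trace = 1 ∧ partialTraceRight ρ = (2 : ℂ)⁻¹ • 1 ∧
        partialTraceLeft ρ = (2 : ℂ)⁻¹ • 1 := by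
  have hsq (f : Fin 3 → ℝ) : ∑ i, f i ^ 2 = 0 ↔ ∀ i, f i = 0 := by
    simp [Finset.sum_eq_zero_iff_of_nonneg fun i _ => sq_nonneg (f i)]
  have hpur : (ρ * ρ).trace = 1 ↔ (ρ * ρ).trace.re = 1 :=
    ⟨fun h => by simp [h], fun h => Complex.ext h (hρ.1.im_trace_mul_eq_zero hρ.1)⟩
  rw [hpur,
    eq_half_smul_one_iff_re_trace_mul_pauli_eq_zero hρ.1.partialTraceRight
      (by rw [trace_partialTraceRight, hρtr]),
    eq_half_smul_one_iff_re_trace_mul_pauli_eq_zero hρ.1.partialTraceLeft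
      (by rw [trace_partialTraceLeft, hρtr]),
    ← hsq fun i => (partialTraceRight ρ * pauli i).trace.re,
    ← hsq fun j => (partialTraceLeft ρ * pauli j).trace.re]
  have hparseval := correlationMatrix_parseval hρ.1 hρtr
  have hpurity : (ρ * ρ).trace.re ≤ 1 := hρ.re_trace_mul_self_le_one hρtr
  have hA := Finset.sum_nonneg fun i (_ : i ∈ Finset.univ) =>
    sq_nonneg (partialTraceRight ρ * pauli i).trace.re
  have hB := Finset.sum_nonneg fun j (_ : j ∈ Finset.univ) =>
    sq_nonneg (partialTraceLeft ρ * pauli j).trace.re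
  constructor
  · intro h
    refine ⟨?_, ?_, ?_⟩ <;> linarith
  · rintro ⟨h₁, h₂, h₃⟩
    linarith

end State

/-- Lemma 1: For a two-qubit density matrix `ρ` with correlation
matrix `T_{ij} = tr(ρ (σ_i ⊗ σ_j))`, every singular value of `T` is at most 1;
equivalently `‖T‖_k ≤ k` for every `k ∈ {1,2,3}`.  Moreover `‖T‖_tr = 3` iff
`ρ` is a maximally entangled pure state, i.e. `ρ` is pure and both one-qubit
reduced density matrices equal `𝕀₂/2`. -/
theorem two_qubit_correlation_matrix_kyFan_bound
    (ρ : Matrix (Fin 2 × Fin 2) (Fin 2 × Fin 2) ℂ)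
    (hρ : ρ.PosSemidef) (hρtr : ρ.trace = 1) :
    (∀ j, singVals (Matrix.of fun i j : Fin 3 =>
        ((ρ * (pauli i ⊗ₖ pauli j)).trace.re)) j ≤ 1) ∧
    (∀ k : ℕ, 1 ≤ k → k ≤ 3 →
      kyFanNorm k (Matrix.of fun i j : Fin 3 =>
        ((ρ * (pauli i ⊗ₖ pauli j)).trace.re)) ≤ k) ∧
    (traceNorm (Matrix.of fun i j : Fin 3 =>
        ((ρ * (pauli i ⊗ₖ pauli j)).trace.re)) = 3 ↔
      ((ρ * ρ).trace = 1 ∧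
        (Matrix.of fun a b : Fin 2 => ∑ c, ρ (a, c) (b, c)) =
          (2 : ℂ)⁻¹ • (1 : Matrix (Fin 2) (Fin 2) ℂ) ∧
        (Matrix.of fun a b : Fin 2 => ∑ c, ρ (c, a) (c, b)) =
          (2 : ℂ)⁻¹ • (1 : Matrix (Fin 2) (Fin 2) ℂ))) := by
  have heig := eigenvalues_conjTranspose_mul_self_le_one fun x y hx hy =>
    dotProduct_correlationMatrix_mulVec_le_one hρ hρtr hx hy
  have hsing (j : Fin 3) : singVals (correlationMatrix ρ) j ≤ 1 := Real.sqrt_le_one.2 (heig j)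
  have htraceNorm := traceNorm_eq_card_iff heig
  rw [Fintype.card_fin, Nat.cast_ofNat] at htraceNorm
  exact ⟨hsing, fun k _ _ => kyFanNorm_le_of_singVals_le_one hsing k,
    htraceNorm.trans (sum_sq_correlationMatrix_eq_three_iff hρ hρtr)⟩
end
end
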